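/- Let (C,J) be a small site. All the representable sheaves ℓ(C), for C an object of C, are supercompact in Sh(C,J) if and only if every J-covering sieve contains a morphism f such that the sieve generated by f alone is J-covering. Likewise, all the representable sheaves are compact in Sh(C,J) if and only if every J-covering sieve contains a finite family of morphisms generating a J-covering sieve. -/

import Mathlib

/-!
A family of morphisms of sheaves `fᵢ : Aᵢ ⟶ X` is jointly epimorphic iff the induced map from the
pointwise coproduct of the underlying presheaves to `X` is locally surjective. For a family
`ℓ(fᵢ)` with `fᵢ : dᵢ ⟶ c`, this map is compared with `∐ y(dᵢ) ⟶ y(c)` along the sheafification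
units, which are locally bijective; the latter map is locally surjective exactly when the `fᵢ`
generate a covering sieve. Conversely, for any jointly epimorphic family into `ℓ(c)`, the arrows
`g` such that `ℓ(g)` factors through a member of the family form a covering sieve; one arrow (or
finitely many) in it generating a covering sieve picks out one member that is an epimorphism (or
finitely many that are jointly epimorphic).
-/

open CategoryTheory CategoryTheory.Limits

universe w v u

/-- A family of morphisms into `X` is jointly epimorphic. -/
def JointlyEpic {C : Type u} [Category.{v} C] {I : Type w} {A : I → C} {X : C}
    (f : ∀ i, A i ⟶ X) : Prop :=
  ∀ ⦃Y : C⦄ (g h : X ⟶ Y), (∀ i, f i ≫ g = f i ≫ h) → g = h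

/-- An object is supercompact if every jointly epimorphic family of morphisms into it
contains an epimorphism. -/
def IsSupercompact {C : Type u} [Category.{v} C] (X : C) : Prop :=
  ∀ {I : Type} (A : I → C) (f : ∀ i, A i ⟶ X), JointlyEpic f → ∃ i, Epi (f i)

/-- An object is compact if every jointly epimorphic family of morphisms into it
contains a finite jointly epimorphic subfamily. -/
def IsCompactObj {C : Type u} [Category.{v} C] (X : C) : Prop :=
  ∀ {I : Type} (A : I → C) (f : ∀ i, A i ⟶ X), JointlyEpic f →
    ∃ s : Finset I, JointlyEpic (fun i : {j // j ∈ s} => f i.1)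

open Opposite

section JointlyEpic

variable {C : Type u} [Category.{v} C]

theorem JointlyEpic.of_factor {I I' : Type*} {A : I → C} {B : I' → C} {X : C}
    {f : ∀ i, A i ⟶ X} {g : ∀ j, B j ⟶ X} (hg : JointlyEpic g)
    (hfac : ∀ j, ∃ (i : I) (t : B j ⟶ A i), t ≫ f i = g j) : JointlyEpic f := by
  intro Y u v huv
  apply hg
  intro j
  obtain ⟨i, t, hfac⟩ := hfac j
  rw [← hfac, Category.assoc, Category.assoc, huv]

theorem JointlyEpic.comp_surjective {I I' : Type*} {A : I → C} {X : C} {f : ∀ i, A i ⟶ X}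
    (hf : JointlyEpic f) {σ : I' → I} (hσ : Function.Surjective σ) :
    JointlyEpic (fun j => f (σ j)) := by
  intro Y u v huv
  apply hf
  intro i
  obtain ⟨j, rfl⟩ := hσ i
  exact huv j

theorem jointlyEpic_const_iff_epi {A X : C} (f : A ⟶ X) :
    JointlyEpic (fun _ : PUnit => f) ↔ Epi f :=
  ⟨fun hf => ⟨fun g h hgh => hf g h fun _ => hgh⟩,
    fun _ _ _ _ hgh => (cancel_epi f).1 (hgh ⟨⟩)⟩

end JointlyEpic

namespace CategoryTheory.Presheaf

variable {C : Type u} [Category.{v} C]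

def pointwiseSigma {I : Type w} (P : I → Cᵒᵖ ⥤ Type w) : Cᵒᵖ ⥤ Type w where
  obj d := Σ i, (P i).obj d
  map g := TypeCat.ofHom fun a => ⟨a.1, (P a.1).map g a.2⟩

namespace pointwiseSigma

section

variable {I : Type w} {P Q : I → Cᵒᵖ ⥤ Type w}

def desc {X : Cᵒᵖ ⥤ Type w} (φ : ∀ i, P i ⟶ X) : pointwiseSigma P ⟶ X where
  app d := TypeCat.ofHom fun a => (φ a.1).app d a.2
  naturality d e g := by
    ext a
    exact NatTrans.naturality_apply (φ a.1) g a.2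

def map (φ : ∀ i, P i ⟶ Q i) : pointwiseSigma P ⟶ pointwiseSigma Q where
  app d := TypeCat.ofHom fun a => ⟨a.1, (φ a.1).app d a.2⟩
  naturality d e g := by
    ext ⟨i, a⟩ : 3
    exact congrArg (Sigma.mk i) (NatTrans.naturality_apply (φ i) g a)

theorem map_desc {X : Cᵒᵖ ⥤ Type w} (φ : ∀ i, P i ⟶ Q i) (ψ : ∀ i, Q i ⟶ X) :
    map φ ≫ desc ψ = desc (fun i => φ i ≫ ψ i) :=
  rfl

theorem desc_comp {X Y : Cᵒᵖ ⥤ Type w} (φ : ∀ i, P i ⟶ X) (g : X ⟶ Y) :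
    desc φ ≫ g = desc (fun i => φ i ≫ g) :=
  rfl

theorem desc_injective {X : Cᵒᵖ ⥤ Type w} : Function.Injective (desc (P := P) (X := X)) := by
  intro φ ψ h
  funext i
  ext d a
  exact ConcreteCategory.congr_hom (NatTrans.congr_app h d) ⟨i, a⟩

variable (J : GrothendieckTopology C)

instance isLocallySurjective_map (φ : ∀ i, P i ⟶ Q i) [∀ i, IsLocallySurjective J (φ i)] :
    IsLocallySurjective J (map φ) where
  imageSieve_mem := by
    rintro d ⟨i, b⟩
    refine J.superset_covering ?_ (imageSieve_mem J (φ i) b)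
    rintro e g ⟨a, ha⟩
    exact ⟨⟨i, a⟩, congrArg (Sigma.mk i) ha⟩

end

theorem imageSieve_desc_yoneda {I : Type v} {c : C} {d : I → C} (f : ∀ i, d i ⟶ c) {e : C}
    (g : e ⟶ c) :
    imageSieve (desc fun i => yoneda.map (f i)) g = (Sieve.ofArrows d f).pullback g := by
  ext e' g'
  simp only [Sieve.pullback_apply, Sieve.mem_ofArrows_iff]
  constructor
  · rintro ⟨⟨i, a⟩, ha⟩
    exact ⟨i, a, ha.symm⟩
  · rintro ⟨i, a, ha⟩
    exact ⟨⟨i, a⟩, ha.symm⟩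

theorem isLocallySurjective_desc_yoneda_iff (J : GrothendieckTopology C) {I : Type v} {c : C}
    {d : I → C} (f : ∀ i, d i ⟶ c) :
    IsLocallySurjective J (desc fun i => yoneda.map (f i)) ↔ Sieve.ofArrows d f ∈ J c := by
  constructor
  · intro _
    simpa only [imageSieve_desc_yoneda, Sieve.pullback_id] using
      imageSieve_mem J (desc fun i => yoneda.map (f i)) (𝟙 c)
  · exact fun h => ⟨fun g => by rw [imageSieve_desc_yoneda]; exact J.pullback_stable g h⟩

end pointwiseSigma

end CategoryTheory.Presheaf

section Sheaves

open Presheaf.pointwiseSigma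

variable {C : Type u} [SmallCategory C] (J : GrothendieckTopology C)

noncomputable abbrev sheafifiedYoneda : C ⥤ Sheaf J (Type u) :=
  yoneda ⋙ presheafToSheaf J (Type u)

theorem jointlyEpic_iff_isLocallySurjective_desc {I : Type u} {A : I → Sheaf J (Type u)}
    {X : Sheaf J (Type u)} (f : ∀ i, A i ⟶ X) :
    JointlyEpic f ↔ Presheaf.IsLocallySurjective J (desc fun i => (f i).hom) := by
  let adj := sheafificationAdjunction J (Type u)
  let q := (adj.homEquiv _ X).symm (desc fun i => (f i).hom)
  have hq : toSheafify J _ ≫ q.hom = desc fun i => (f i).hom := by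
    rw [← sheafificationAdjunction_unit_app]
    exact (adj.homEquiv_unit _ _ q).symm.trans ((adj.homEquiv _ X).apply_symm_apply _)
  have hcancel : ∀ ⦃Z⦄ (g h : X ⟶ Z), q ≫ g = q ≫ h ↔ ∀ i, f i ≫ g = f i ≫ h := by
    intro Z g h
    rw [← (adj.homEquiv _ Z).apply_eq_iff_eq, adj.homEquiv_naturality_right,
      adj.homEquiv_naturality_right, Equiv.apply_symm_apply]
    change desc _ ≫ g.hom = desc _ ≫ h.hom ↔ _
    rw [desc_comp, desc_comp, desc_injective.eq_iff, funext_iff]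
    simp only [Sheaf.hom_ext_iff]
    rfl
  rw [← hq, Presheaf.comp_isLocallySurjective_iff]
  refine Iff.trans ?_ (Sheaf.isLocallySurjective_iff_epi q).symm
  exact ⟨fun hf => ⟨fun g h hgh => hf g h ((hcancel g h).1 hgh)⟩,
    fun _ _ g h hgh => (cancel_epi q).1 ((hcancel g h).2 hgh)⟩

theorem jointlyEpic_sheafifiedYoneda_map_iff {I : Type u} {c : C} {d : I → C} (f : ∀ i, d i ⟶ c) :
    JointlyEpic (fun i => (sheafifiedYoneda J).map (f i)) ↔ Sieve.ofArrows d f ∈ J c := by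
  rw [jointlyEpic_iff_isLocallySurjective_desc, ← isLocallySurjective_desc_yoneda_iff J f,
    ← Presheaf.comp_isLocallySurjective_iff J (map fun i => toSheafify J (yoneda.obj (d i))),
    map_desc, ← Presheaf.isLocallySurjective_comp_iff J _ (toSheafify J (yoneda.obj c)),
    desc_comp]
  simp only [toSheafify_naturality]
  rfl

noncomputable def sheafifiedYonedaEquiv {c : C} {Y : Sheaf J (Type u)} :
    ((sheafifiedYoneda J).obj c ⟶ Y) ≃ Y.obj.obj (op c) :=
  ((sheafificationAdjunction J _).homEquiv _ _).trans yonedaEquiv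

variable {J}

theorem sheafifiedYonedaEquiv_comp {c : C} {Y Z : Sheaf J (Type u)}
    (t : (sheafifiedYoneda J).obj c ⟶ Y) (g : Y ⟶ Z) :
    sheafifiedYonedaEquiv J (t ≫ g) = g.hom.app _ (sheafifiedYonedaEquiv J t) := by
  simp only [sheafifiedYonedaEquiv, Equiv.trans_apply, Adjunction.homEquiv_naturality_right]
  exact yonedaEquiv_comp _ _

theorem sheafifiedYonedaEquiv_map_comp {c d : C} {Y : Sheaf J (Type u)} (g : d ⟶ c)
    (t : (sheafifiedYoneda J).obj c ⟶ Y) :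
    sheafifiedYonedaEquiv J ((sheafifiedYoneda J).map g ≫ t) =
      Y.obj.map g.op (sheafifiedYonedaEquiv J t) := by
  simp only [sheafifiedYonedaEquiv, Equiv.trans_apply, Functor.comp_map,
    Adjunction.homEquiv_naturality_left]
  exact (yonedaEquiv_naturality _ _).symm

theorem JointlyEpic.exists_covering_factor {I : Type u} {A : I → Sheaf J (Type u)} {c : C}
    {f : ∀ i, A i ⟶ (sheafifiedYoneda J).obj c} (hf : JointlyEpic f) :
    ∃ S ∈ J c, ∀ ⦃d : C⦄ ⦃g : d ⟶ c⦄, S g →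
      ∃ (i : I) (t : (sheafifiedYoneda J).obj d ⟶ A i),
        t ≫ f i = (sheafifiedYoneda J).map g := by
  have := (jointlyEpic_iff_isLocallySurjective_desc J f).1 hf
  refine ⟨_, Presheaf.imageSieve_mem J (desc fun i => (f i).hom)
    (sheafifiedYonedaEquiv J (𝟙 ((sheafifiedYoneda J).obj c))), ?_⟩
  rintro d g ⟨⟨i, a⟩, ha⟩
  refine ⟨i, (sheafifiedYonedaEquiv J).symm a, (sheafifiedYonedaEquiv J).injective ?_⟩
  rw [sheafifiedYonedaEquiv_comp, Equiv.apply_symm_apply,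
    ← Category.comp_id ((sheafifiedYoneda J).map g),
    sheafifiedYonedaEquiv_map_comp]
  exact ha

theorem jointlyEpic_map_arrows_of_mem {c : C} {S : Sieve c} (hS : S ∈ J c) :
    JointlyEpic (fun f : S.arrows.category => (sheafifiedYoneda J).map f.obj.hom) := by
  rwa [jointlyEpic_sheafifiedYoneda_map_iff, Sieve.ofArrows, Presieve.ofArrows_category,
    Sieve.generate_sieve]

end Sheaves

section SmallSite

variable {C : Type} [SmallCategory C] (J : GrothendieckTopology C)

theorem isSupercompact_sheafifiedYoneda_obj_iff (c : C) :
    IsSupercompact ((sheafifiedYoneda J).obj c) ↔ ∀ S ∈ J c, ∃ (d : C) (f : d ⟶ c),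
      S.arrows f ∧ Sieve.generate (Presieve.singleton f) ∈ J c := by
  simp only [← Presieve.ofArrows_pUnit.{0}, ← jointlyEpic_sheafifiedYoneda_map_iff,
    jointlyEpic_const_iff_epi]
  constructor
  · intro h S hS
    obtain ⟨f, hepi⟩ := h _ _ (jointlyEpic_map_arrows_of_mem hS)
    exact ⟨_, f.obj.hom, f.property, hepi⟩
  · intro h I A f hf
    obtain ⟨S, hS, hfac⟩ := hf.exists_covering_factor
    obtain ⟨d, g, hg, hepi⟩ := h S hS
    obtain ⟨i, t, ht⟩ := hfac hg
    exact ⟨i, epi_of_epi_fac ht⟩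

theorem isCompactObj_sheafifiedYoneda_obj_iff (c : C) :
    IsCompactObj ((sheafifiedYoneda J).obj c) ↔ ∀ S ∈ J c, ∃ (n : ℕ) (ds : Fin n → C)
      (fs : ∀ i, ds i ⟶ c), (∀ i, S.arrows (fs i)) ∧
        Sieve.generate (Presieve.ofArrows ds fs) ∈ J c := by
  constructor
  · intro h S hS
    obtain ⟨s, hs⟩ := h _ _ (jointlyEpic_map_arrows_of_mem hS)
    let e := s.equivFin.symm
    refine ⟨s.card, fun k => (e k).1.obj.left, fun k => (e k).1.obj.hom,
      fun k => (e k).1.property, (jointlyEpic_sheafifiedYoneda_map_iff J _).1 ?_⟩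
    exact hs.comp_surjective e.surjective
  · intro h I A f hf
    classical
    obtain ⟨S, hS, hfac⟩ := hf.exists_covering_factor
    obtain ⟨n, ds, fs, hfs, hcov⟩ := h S hS
    choose j t ht using fun k => hfac (hfs k)
    exact ⟨Finset.univ.image j, ((jointlyEpic_sheafifiedYoneda_map_iff J fs).2 hcov).of_factor
      fun k => ⟨⟨j k, Finset.mem_image_of_mem j (Finset.mem_univ k)⟩, t k, ht k⟩⟩

end SmallSite

theorem stmt16 {C : Type} [SmallCategory C] (J : GrothendieckTopology C) :
    ((∀ c : C, IsSupercompact ((presheafToSheaf J (Type)).obj (yoneda.obj c))) ↔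
      ∀ (c : C) (S : Sieve c), S ∈ J c →
        ∃ (d : C) (f : d ⟶ c), S.arrows f ∧
          Sieve.generate (Presieve.singleton f) ∈ J c) ∧
    ((∀ c : C, IsCompactObj ((presheafToSheaf J (Type)).obj (yoneda.obj c))) ↔
      ∀ (c : C) (S : Sieve c), S ∈ J c →
        ∃ (n : ℕ) (ds : Fin n → C) (fs : ∀ i, ds i ⟶ c),
          (∀ i, S.arrows (fs i)) ∧
            Sieve.generate (Presieve.ofArrows ds fs) ∈ J c) :=
  ⟨forall_congr' (isSupercompact_sheafifiedYoneda_obj_iff J),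
    forall_congr' (isCompactObj_sheafifiedYoneda_obj_iff J)⟩
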